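/- arXiv:1809.01106 — 5 statements merged into one kernel-verified Lean document; each statement's English description precedes it below -/
import Mathlib

section
/- Let K ⊆ ℝ^m be nonempty, closed, convex; let f̃: K × K → ℝ be continuously differentiable in its first argument with ∇f̃(x;x) = ∇f(x) for all x ∈ K, f̃(·;y) τ-strongly convex uniformly in y, and ∇f̃(x;·) L̃-Lipschitz uniformly in x. Let G⁻ be C¹ and G⁺ convex on K, and let F = Σ_i f_i with each ∇f_j Lipschitz. Define the best-response map x̂(z) = argmin_{x∈K} { f̃(x;z) − ∇G⁻(z)ᵀ(x−z) + (Σ_{j≠i} ∇f_j(z))ᵀ(x−z) + G⁺(x) }. Then z* ∈ K is a fixed point of x̂ (i.e., x̂(z*) = z*) if and only if z* is a d-stationary point of min_{x∈K} F(x) + G⁺(x) − G⁻(x). -/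
/-!
Gradient consistency `∇f̃(z; z) = ∇f_{i₀}(z)` makes the gradient of the smooth part of the
surrogate problem at `z` equal to `∇F(z) - ∇G⁻(z)`. By uniqueness of the best response, `z` is a
fixed point exactly when it minimizes the convex surrogate objective at `z`, and for a sum of a
differentiable convex function and a convex function this minimality is equivalent to the
first-order variational inequality, which is d-stationarity.
-/

open Finset
open scoped RealInnerProductSpace

section FirstOrder

variable {E : Type*} [NormedAddCommGroup E] [InnerProductSpace ℝ E]
  {K : Set E} {φ ψ : E → ℝ} {g z w : E}

theorem convexOn_inner_sub (hK : Convex ℝ K) (c z : E) : ConvexOn ℝ K fun w => ⟪c, w - z⟫ :=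
  (((innerₛₗ ℝ c).convexOn hK).add_const (-⟪c, z⟫)).congr fun w _ => by
    simp [inner_sub_right, ← sub_eq_add_neg]

variable [CompleteSpace E]

theorem HasGradientAt.hasDerivAt_lineMap (hφ : HasGradientAt φ g z) (w : E) :
    HasDerivAt (fun t : ℝ => φ (AffineMap.lineMap z w t)) ⟪g, w - z⟫ 0 := by
  have hφ' : HasFDerivAt φ (InnerProductSpace.toDual ℝ E g) (AffineMap.lineMap z w (0 : ℝ)) := by
    simpa using hφ.hasFDerivAt
  have h := hφ'.comp_hasDerivAt 0 AffineMap.hasDerivAt_lineMap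
  simp only [InnerProductSpace.toDual_apply_apply] at h
  exact h

theorem ConvexOn.inner_gradient_le_sub (hφc : ConvexOn ℝ K φ) (hφ : HasGradientAt φ g z)
    (hz : z ∈ K) (hw : w ∈ K) : ⟪g, w - z⟫ ≤ φ w - φ z := by
  have hseg : ConvexOn ℝ (Set.Icc (0 : ℝ) 1) (fun t => φ (AffineMap.lineMap z w t)) :=
    (hφc.comp_affineMap _).subset (fun t ht => hφc.1.lineMap_mem hz hw ht) (convex_Icc 0 1)
  simpa [slope_def_field] using
    hseg.le_slope_of_hasDerivAt (by simp) (by simp) zero_lt_one (hφ.hasDerivAt_lineMap w)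

theorem IsMinOn.inner_gradient_add_sub_nonneg (hmin : IsMinOn (fun x => φ x + ψ x) K z)
    (hφ : HasGradientAt φ g z) (hψ : ConvexOn ℝ K ψ) (hz : z ∈ K) (hw : w ∈ K) :
    0 ≤ ⟪g, w - z⟫ + ψ w - ψ z := by
  -- along the segment, `ψ` lies below its chord, so the chord version still has its minimum at `0`
  set h : ℝ → ℝ := fun t => φ (AffineMap.lineMap z w t) + t * (ψ w - ψ z)
  have hderiv : HasDerivAt h (⟪g, w - z⟫ + (ψ w - ψ z)) 0 := by
    have := (hφ.hasDerivAt_lineMap w).add ((hasDerivAt_id (0 : ℝ)).mul_const (ψ w - ψ z))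
    simp only [id, one_mul] at this
    exact this
  have hhmin : IsMinOn h (Set.Icc 0 1) 0 := by
    intro t ht
    have hchord : ψ (AffineMap.lineMap z w t) ≤ (1 - t) * ψ z + t * ψ w := by
      simpa [AffineMap.lineMap_apply_module] using
        hψ.2 hz hw (sub_nonneg.2 ht.2) ht.1 (sub_add_cancel 1 t)
    have := hmin (hψ.1.lineMap_mem hz hw ht)
    simp only [Set.mem_ofPred_eq, h, AffineMap.lineMap_apply_zero, zero_mul, add_zero] at this ⊢
    linarith
  have hone : (1 : ℝ) ∈ posTangentConeAt (Set.Icc 0 1) 0 :=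
    mem_posTangentConeAt_of_segment_subset (by simp [segment_eq_Icc])
  simpa [add_sub_assoc] using
    hhmin.localize.hasFDerivWithinAt_nonneg hderiv.hasFDerivAt.hasFDerivWithinAt hone

theorem ConvexOn.isMinOn_add_iff (hφc : ConvexOn ℝ K φ) (hφ : HasGradientAt φ g z)
    (hψ : ConvexOn ℝ K ψ) (hz : z ∈ K) :
    IsMinOn (fun x => φ x + ψ x) K z ↔ ∀ w ∈ K, 0 ≤ ⟪g, w - z⟫ + ψ w - ψ z := by
  refine ⟨fun hmin w hw => hmin.inner_gradient_add_sub_nonneg hφ hψ hz hw,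
    fun h => isMinOn_iff.2 fun w hw => ?_⟩
  linarith [h w hw, hφc.inner_gradient_le_sub hφ hz hw]

end FirstOrder

theorem stmt6_general (I mdim : ℕ) (i₀ : Fin I)
    (K : Set (EuclideanSpace ℝ (Fin mdim)))
    (hKconv : Convex ℝ K)
    (gfs : Fin I → EuclideanSpace ℝ (Fin mdim) → EuclideanSpace ℝ (Fin mdim))
    (ftilde : EuclideanSpace ℝ (Fin mdim) → EuclideanSpace ℝ (Fin mdim) → ℝ)
    (gft : EuclideanSpace ℝ (Fin mdim) → EuclideanSpace ℝ (Fin mdim) →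
      EuclideanSpace ℝ (Fin mdim))
    (hgft : ∀ y z, HasGradientAt (fun w => ftilde w z) (gft y z) y)
    (τ : ℝ) (hτ : 0 < τ)
    (hstrong : ∀ y, StrongConvexOn K τ (fun w => ftilde w y))
    (hconsist : ∀ z ∈ K, gft z z = gfs i₀ z)
    (gGm : EuclideanSpace ℝ (Fin mdim) → EuclideanSpace ℝ (Fin mdim))
    (Gp : EuclideanSpace ℝ (Fin mdim) → ℝ) (hGp : ConvexOn ℝ K Gp)
    (xhat : EuclideanSpace ℝ (Fin mdim) → EuclideanSpace ℝ (Fin mdim))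
    (hxhat_min : ∀ z ∈ K, ∀ w ∈ K,
      ftilde (xhat z) z - ⟪gGm z, xhat z - z⟫
          + ⟪∑ j ∈ Finset.univ.erase i₀, gfs j z, xhat z - z⟫ + Gp (xhat z) ≤
        ftilde w z - ⟪gGm z, w - z⟫
          + ⟪∑ j ∈ Finset.univ.erase i₀, gfs j z, w - z⟫ + Gp w)
    (hxhat_unique : ∀ z ∈ K, ∀ v ∈ K,
      (∀ w ∈ K,
        ftilde v z - ⟪gGm z, v - z⟫
            + ⟪∑ j ∈ Finset.univ.erase i₀, gfs j z, v - z⟫ + Gp v ≤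
          ftilde w z - ⟪gGm z, w - z⟫
            + ⟪∑ j ∈ Finset.univ.erase i₀, gfs j z, w - z⟫ + Gp w) → v = xhat z) :
    ∀ zs ∈ K, (xhat zs = zs ↔
      ∀ w ∈ K, 0 ≤ ⟪(∑ j, gfs j zs) - gGm zs, w - zs⟫ + Gp w - Gp zs) := by
  intro zs hzs
  set c := (∑ j ∈ Finset.univ.erase i₀, gfs j zs) - gGm zs
  set ψ := fun w => ⟪c, w - zs⟫ + Gp w
  have hsurrogate : ∀ w, ftilde w zs - ⟪gGm zs, w - zs⟫
      + ⟪∑ j ∈ Finset.univ.erase i₀, gfs j zs, w - zs⟫ + Gp w = ftilde w zs + ψ w := by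
    intro w
    simp only [ψ, c, inner_sub_left]
    ring
  have hfix : xhat zs = zs ↔ IsMinOn (fun w => ftilde w zs + ψ w) K zs := by
    simp only [isMinOn_iff, ← hsurrogate]
    refine ⟨fun h => ?_, fun h => (hxhat_unique zs hzs zs hzs h).symm⟩
    simpa only [h] using hxhat_min zs hzs
  have hgrad : (∑ j, gfs j zs) - gGm zs = gft zs zs + c := by
    rw [hconsist zs hzs, ← Finset.add_sum_erase _ _ (Finset.mem_univ i₀), add_sub_assoc]
  have hψ : ConvexOn ℝ K ψ := (convexOn_inner_sub hKconv c zs).add hGp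
  refine hfix.trans <| (((hstrong zs).strictConvexOn hτ).convexOn.isMinOn_add_iff
    (hgft zs zs) hψ hzs).trans <| forall₂_congr fun w _ => ?_
  simp only [ψ, hgrad, inner_add_left, sub_self, inner_zero_right]
  ring_nf

/-- Fixed points of the error-free best-response map coincide with d-stationary points. -/
theorem stmt6 (I mdim : ℕ) (i₀ : Fin I)
    (K : Set (EuclideanSpace ℝ (Fin mdim)))
    (hK : K.Nonempty) (hKc : IsClosed K) (hKconv : Convex ℝ K)
    (fs : Fin I → EuclideanSpace ℝ (Fin mdim) → ℝ)
    (gfs : Fin I → EuclideanSpace ℝ (Fin mdim) → EuclideanSpace ℝ (Fin mdim))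
    (hgfs : ∀ j z, HasGradientAt (fs j) (gfs j z) z)
    (Lc : Fin I → ℝ)
    (hLip : ∀ j, ∀ a ∈ K, ∀ b ∈ K, ‖gfs j a - gfs j b‖ ≤ Lc j * ‖a - b‖)
    (ftilde : EuclideanSpace ℝ (Fin mdim) → EuclideanSpace ℝ (Fin mdim) → ℝ)
    (gft : EuclideanSpace ℝ (Fin mdim) → EuclideanSpace ℝ (Fin mdim) →
      EuclideanSpace ℝ (Fin mdim))
    (hgft : ∀ y z, HasGradientAt (fun w => ftilde w z) (gft y z) y)
    (τ : ℝ) (hτ : 0 < τ)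
    (hstrong : ∀ y, StrongConvexOn K τ (fun w => ftilde w y))
    (hconsist : ∀ z ∈ K, gft z z = gfs i₀ z)
    (Ltil : ℝ)
    (hgftLip : ∀ w, ∀ a ∈ K, ∀ b ∈ K, ‖gft w a - gft w b‖ ≤ Ltil * ‖a - b‖)
    (Gm : EuclideanSpace ℝ (Fin mdim) → ℝ)
    (gGm : EuclideanSpace ℝ (Fin mdim) → EuclideanSpace ℝ (Fin mdim))
    (hGm : ∀ z, HasGradientAt Gm (gGm z) z)
    (Gp : EuclideanSpace ℝ (Fin mdim) → ℝ) (hGp : ConvexOn ℝ K Gp)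
    (xhat : EuclideanSpace ℝ (Fin mdim) → EuclideanSpace ℝ (Fin mdim))
    (hxhat_mem : ∀ z ∈ K, xhat z ∈ K)
    (hxhat_min : ∀ z ∈ K, ∀ w ∈ K,
      ftilde (xhat z) z - ⟪gGm z, xhat z - z⟫
          + ⟪∑ j ∈ Finset.univ.erase i₀, gfs j z, xhat z - z⟫ + Gp (xhat z) ≤
        ftilde w z - ⟪gGm z, w - z⟫
          + ⟪∑ j ∈ Finset.univ.erase i₀, gfs j z, w - z⟫ + Gp w)
    (hxhat_unique : ∀ z ∈ K, ∀ v ∈ K,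
      (∀ w ∈ K,
        ftilde v z - ⟪gGm z, v - z⟫
            + ⟪∑ j ∈ Finset.univ.erase i₀, gfs j z, v - z⟫ + Gp v ≤
          ftilde w z - ⟪gGm z, w - z⟫
            + ⟪∑ j ∈ Finset.univ.erase i₀, gfs j z, w - z⟫ + Gp w) → v = xhat z) :
    ∀ zs ∈ K, (xhat zs = zs ↔
      ∀ w ∈ K, 0 ≤ ⟪(∑ j, gfs j zs) - gGm zs, w - zs⟫ + Gp w - Gp zs) :=
  stmt6_general I mdim i₀ K hKconv gfs ftilde gft hgft τ hτ hstrong hconsist gGm Gp hGp xhat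
    hxhat_min hxhat_unique
end

section
/- Under the same assumptions on K, f̃ (with ∇f̃(x;x) = ∇f(x), τ-strong convexity in the first argument, and L̃-Lipschitz continuity of ∇f̃(x;·)), G⁺ convex, G⁻ with L_G-Lipschitz gradient, and each ∇f_j L_j-Lipschitz with L = Σ_j L_j: the best-response map x̂(z) = argmin_{x∈K} { f̃(x;z) − ∇G⁻(z)ᵀ(x−z) + (Σ_{j≠i} ∇f_j(z))ᵀ(x−z) + G⁺(x) } is Lipschitz continuous on K; concretely, there exists a finite L̂ > 0 (depending on τ, L̃, L_G, L) such that ‖x̂(z) − x̂(w)‖ ≤ L̂ ‖z − w‖ for all z, w ∈ K. -/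
/-!
The best response `xhat z` minimizes, over `K`, a smooth `τ`-strongly convex function plus the
convex `G⁺`; hence it solves the variational inequality
`G⁺ (xhat z) - G⁺ y ≤ ⟪F (xhat z) z, y - xhat z⟫` (`y ∈ K`), where `F · z` is the gradient of the
smooth part. Adding this inequality at `z` (tested with `xhat w`) to the one at `w` (tested with
`xhat z`) cancels `G⁺`. Strong monotonicity of `F · z` (from strong convexity) and the Lipschitz
dependence of `F a ·` on the parameter, with constant `L̃ + Σ_{j≠i} L_j + L_G`, then give
`τ ‖xhat z - xhat w‖ ≤ (L̃ + Σ_{j≠i} L_j + L_G) ‖z - w‖`.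
-/

open Set Filter Finset
open scoped RealInnerProductSpace Topology

theorem HasDerivAt.le_of_eventually_add_mul_le {φ : ℝ → ℝ} {x D c : ℝ} (hφ : HasDerivAt φ D x)
    (h : ∀ᶠ t in 𝓝[>] 0, φ x + t * c ≤ φ (x + t)) : c ≤ D := by
  refine ge_of_tendsto hφ.tendsto_slope_zero_right ?_
  filter_upwards [h, self_mem_nhdsWithin] with t ht (ht0 : 0 < t)
  rw [smul_eq_mul, le_inv_mul_iff₀ ht0]
  linarith

section Gradient

variable {E : Type*} [NormedAddCommGroup E] [InnerProductSpace ℝ E] [CompleteSpace E]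
  {f h : E → ℝ} {K : Set E} {g g' x y : E}

theorem HasGradientAt.hasLineDerivAt (hf : HasGradientAt f g x) (v : E) :
    HasLineDerivAt ℝ f ⟪g, v⟫ x v :=
  hf.hasFDerivAt.hasLineDerivAt v

theorem HasGradientAt.neg (hf : HasGradientAt f g x) : HasGradientAt (fun w => -f w) (-g) x := by
  have := hf.hasFDerivAt.neg
  rw [← map_neg] at this
  exact this

theorem HasGradientAt.add (hf : HasGradientAt f g x) (hh : HasGradientAt h g' x) :
    HasGradientAt (fun w => f w + h w) (g + g') x := by
  have := hf.hasFDerivAt.add hh.hasFDerivAt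
  rw [← map_add] at this
  exact this

theorem HasGradientAt.sub (hf : HasGradientAt f g x) (hh : HasGradientAt h g' x) :
    HasGradientAt (fun w => f w - h w) (g - g') x := by
  have := hf.hasFDerivAt.sub hh.hasFDerivAt
  rw [← map_sub] at this
  exact this

theorem hasGradientAt_inner_sub (q z : E) : HasGradientAt (fun w => ⟪q, w - z⟫) q x := by
  simp_rw [hasGradientAt_iff_hasFDerivAt, inner_sub_right]
  exact (innerSL ℝ q).hasFDerivAt.sub_const _

theorem hasGradientAt_half_mul_norm_sq (c : ℝ) :
    HasGradientAt (fun w : E => c / 2 * ‖w‖ ^ 2) (c • x) x := by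
  refine ((hasStrictFDerivAt_norm_sq x).hasFDerivAt.const_mul (c / 2)).congr_fderiv ?_
  ext v
  simp
  ring

theorem IsMinOn.sub_le_inner_gradient (hmin : IsMinOn (fun w => f w + h w) K x)
    (hh : ConvexOn ℝ K h) (hx : x ∈ K) (hy : y ∈ K) (hf : HasGradientAt f g x) :
    h x - h y ≤ ⟪g, y - x⟫ := by
  refine (hf.hasLineDerivAt (y - x)).le_of_eventually_add_mul_le ?_
  filter_upwards [Ioc_mem_nhdsGT one_pos] with t ⟨ht0, ht1⟩
  have hseg : x + t • (y - x) = (1 - t) • x + t • y := by module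
  have hconv := hh.2 hx hy (sub_nonneg.2 ht1) ht0.le (sub_add_cancel 1 t)
  have hle := hmin (hh.1 hx hy (sub_nonneg.2 ht1) ht0.le (sub_add_cancel 1 t))
  simp only [smul_eq_mul, mem_ofPred_eq] at hconv hle
  rw [zero_smul, add_zero, zero_add, hseg]
  linarith

theorem ConvexOn.inner_gradient_le (hf : ConvexOn ℝ K f) (hx : x ∈ K) (hy : y ∈ K)
    (hg : HasGradientAt f g x) : ⟪g, y - x⟫ ≤ f y - f x := by
  -- `-f + f` vanishes identically, so every point of `K` minimizes it
  have hmin : IsMinOn (fun w => -f w + f w) K x := fun _ _ => by simp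
  have := hmin.sub_le_inner_gradient hf hx hy hg.neg
  rw [inner_neg_left] at this
  linarith

theorem ConvexOn.inner_gradient_sub_nonneg {a b ga gb : E} (hf : ConvexOn ℝ K f)
    (ha : a ∈ K) (hb : b ∈ K) (hga : HasGradientAt f ga a) (hgb : HasGradientAt f gb b) :
    0 ≤ ⟪ga - gb, a - b⟫ := by
  have h₁ := hf.inner_gradient_le ha hb hga
  have h₂ := hf.inner_gradient_le hb ha hgb
  rw [← neg_sub a b, inner_neg_right] at h₁
  rw [inner_sub_left]
  linarith

theorem StrongConvexOn.mul_norm_sq_le_inner_gradient_sub {τ : ℝ} {a b ga gb : E}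
    (hf : StrongConvexOn K τ f) (ha : a ∈ K) (hb : b ∈ K)
    (hga : HasGradientAt f ga a) (hgb : HasGradientAt f gb b) :
    τ * ‖a - b‖ ^ 2 ≤ ⟪ga - gb, a - b⟫ := by
  have := (strongConvexOn_iff_convex.mp hf).inner_gradient_sub_nonneg ha hb
    (hga.sub (hasGradientAt_half_mul_norm_sq τ)) (hgb.sub (hasGradientAt_half_mul_norm_sq τ))
  rw [show ga - τ • a - (gb - τ • b) = (ga - gb) - τ • (a - b) by module, inner_sub_left,
    real_inner_smul_left, real_inner_self_eq_norm_sq] at this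
  linarith

end Gradient

theorem mul_norm_sub_le_of_variationalInequality {E P : Type*} [NormedAddCommGroup E]
    [InnerProductSpace ℝ E] [SeminormedAddCommGroup P] {K : Set E} {Z : Set P}
    {F : E → P → E} {φ : E → ℝ} {x : P → E} {τ L : ℝ}
    (hx : ∀ z ∈ Z, x z ∈ K)
    (hvi : ∀ z ∈ Z, ∀ y ∈ K, φ (x z) - φ y ≤ ⟪F (x z) z, y - x z⟫)
    (hmono : ∀ z ∈ Z, ∀ a ∈ K, ∀ b ∈ K, τ * ‖a - b‖ ^ 2 ≤ ⟪F a z - F b z, a - b⟫)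
    (hlip : ∀ a ∈ K, ∀ z ∈ Z, ∀ w ∈ Z, ‖F a z - F a w‖ ≤ L * ‖z - w‖)
    {z w : P} (hz : z ∈ Z) (hw : w ∈ Z) :
    τ * ‖x z - x w‖ ≤ L * ‖z - w‖ := by
  set d := x z - x w
  have hsum : ⟪F (x z) z - F (x w) w, d⟫ ≤ 0 := by
    have h₁ := hvi z hz (x w) (hx w hw)
    have h₂ := hvi w hw (x z) (hx z hz)
    rw [← neg_sub (x z) (x w), inner_neg_right] at h₁
    rw [inner_sub_left]
    linarith
  have hparam : ⟪F (x w) w - F (x w) z, d⟫ ≤ L * ‖z - w‖ * ‖d‖ := by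
    refine (real_inner_le_norm _ _).trans (mul_le_mul_of_nonneg_right ?_ (norm_nonneg d))
    rw [norm_sub_rev]
    exact hlip (x w) (hx w hw) z hz w hw
  have key : τ * ‖d‖ * ‖d‖ ≤ L * ‖z - w‖ * ‖d‖ := by
    calc τ * ‖d‖ * ‖d‖ = τ * ‖d‖ ^ 2 := by ring
      _ ≤ ⟪F (x z) z - F (x w) z, d⟫ := hmono z hz _ (hx z hz) _ (hx w hw)
      _ = ⟪F (x z) z - F (x w) w, d⟫ + ⟪F (x w) w - F (x w) z, d⟫ := by
        rw [← inner_add_left, sub_add_sub_cancel]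
      _ ≤ L * ‖z - w‖ * ‖d‖ := by linarith
  rcases (norm_nonneg d).eq_or_lt with hd | hd
  · rw [← hd, mul_zero]
    exact (norm_nonneg _).trans (hlip (x z) (hx z hz) z hz w hw)
  · exact le_of_mul_le_mul_right key hd

theorem norm_sum_sub_sum_le_mul {ι E P : Type*} [SeminormedAddCommGroup E]
    [SeminormedAddCommGroup P] (s : Finset ι) {f : ι → P → E} {L : ι → ℝ} {z w : P}
    (h : ∀ j ∈ s, ‖f j z - f j w‖ ≤ L j * ‖z - w‖) :
    ‖∑ j ∈ s, f j z - ∑ j ∈ s, f j w‖ ≤ (∑ j ∈ s, L j) * ‖z - w‖ := by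
  rw [← sum_sub_distrib, sum_mul]
  exact (norm_sum_le _ _).trans (sum_le_sum h)

theorem stmt7_general (I mdim : ℕ) (i₀ : Fin I)
    (K : Set (EuclideanSpace ℝ (Fin mdim)))
    (gfs : Fin I → EuclideanSpace ℝ (Fin mdim) → EuclideanSpace ℝ (Fin mdim))
    (Lc : Fin I → ℝ)
    (hLip : ∀ j, ∀ a ∈ K, ∀ b ∈ K, ‖gfs j a - gfs j b‖ ≤ Lc j * ‖a - b‖)
    (ftilde : EuclideanSpace ℝ (Fin mdim) → EuclideanSpace ℝ (Fin mdim) → ℝ)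
    (gft : EuclideanSpace ℝ (Fin mdim) → EuclideanSpace ℝ (Fin mdim) →
      EuclideanSpace ℝ (Fin mdim))
    (hgft : ∀ y z, HasGradientAt (fun w => ftilde w z) (gft y z) y)
    (τ : ℝ) (hτ : 0 < τ)
    (hstrong : ∀ y, StrongConvexOn K τ (fun w => ftilde w y))
    (Ltil : ℝ)
    (hgftLip : ∀ w, ∀ a ∈ K, ∀ b ∈ K, ‖gft w a - gft w b‖ ≤ Ltil * ‖a - b‖)
    (gGm : EuclideanSpace ℝ (Fin mdim) → EuclideanSpace ℝ (Fin mdim))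
    (LG : ℝ)
    (hGmLip : ∀ a ∈ K, ∀ b ∈ K, ‖gGm a - gGm b‖ ≤ LG * ‖a - b‖)
    (Gp : EuclideanSpace ℝ (Fin mdim) → ℝ) (hGp : ConvexOn ℝ K Gp)
    (xhat : EuclideanSpace ℝ (Fin mdim) → EuclideanSpace ℝ (Fin mdim))
    (hxhat_mem : ∀ z ∈ K, xhat z ∈ K)
    (hxhat_min : ∀ z ∈ K, ∀ w ∈ K,
      ftilde (xhat z) z - ⟪gGm z, xhat z - z⟫
          + ⟪∑ j ∈ Finset.univ.erase i₀, gfs j z, xhat z - z⟫ + Gp (xhat z) ≤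
        ftilde w z - ⟪gGm z, w - z⟫
          + ⟪∑ j ∈ Finset.univ.erase i₀, gfs j z, w - z⟫ + Gp w) :
    ∃ Lhat : ℝ, 0 < Lhat ∧
      ∀ z ∈ K, ∀ w ∈ K, ‖xhat z - xhat w‖ ≤ Lhat * ‖z - w‖ := by
  set S := ∑ j ∈ univ.erase i₀, Lc j
  let q z := ∑ j ∈ univ.erase i₀, gfs j z - gGm z
  -- `F a z` is the gradient at `a` of the smooth part of the objective defining `xhat z`
  let F a z := gft a z + q z
  have hvi : ∀ z ∈ K, ∀ y ∈ K, Gp (xhat z) - Gp y ≤ ⟪F (xhat z) z, y - xhat z⟫ := by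
    intro z hz y hy
    refine IsMinOn.sub_le_inner_gradient (fun w hw => ?_) hGp (hxhat_mem z hz) hy
      ((hgft (xhat z) z).add (hasGradientAt_inner_sub (q z) z))
    have := hxhat_min z hz w hw
    simp only [mem_ofPred_eq, q, inner_sub_left] at this ⊢
    linarith
  have hmono : ∀ z ∈ K, ∀ a ∈ K, ∀ b ∈ K, τ * ‖a - b‖ ^ 2 ≤ ⟪F a z - F b z, a - b⟫ := by
    intro z _ a ha b hb
    rw [add_sub_add_right_eq_sub]
    exact (hstrong z).mul_norm_sq_le_inner_gradient_sub ha hb (hgft a z) (hgft b z)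
  have hlip : ∀ a ∈ K, ∀ z ∈ K, ∀ w ∈ K, ‖F a z - F a w‖ ≤ (Ltil + S + LG) * ‖z - w‖ := by
    intro a _ z hz w hw
    calc ‖F a z - F a w‖
        = ‖(gft a z - gft a w) + (∑ j ∈ univ.erase i₀, gfs j z - ∑ j ∈ univ.erase i₀, gfs j w)
            - (gGm z - gGm w)‖ := by congr 1; simp only [F, q]; abel
      _ ≤ Ltil * ‖z - w‖ + S * ‖z - w‖ + LG * ‖z - w‖ :=
        norm_sub_le_of_le (norm_add_le_of_le (hgftLip a z hz w hw)
          (norm_sum_sub_sum_le_mul _ fun j _ => hLip j z hz w hw)) (hGmLip z hz w hw)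
      _ = (Ltil + S + LG) * ‖z - w‖ := by ring
  refine ⟨max ((Ltil + S + LG) / τ) 1, lt_max_of_lt_right one_pos, fun z hz w hw => ?_⟩
  have key := mul_norm_sub_le_of_variationalInequality hxhat_mem hvi hmono hlip hz hw
  calc ‖xhat z - xhat w‖ ≤ (Ltil + S + LG) / τ * ‖z - w‖ := by
        rw [div_mul_eq_mul_div, le_div_iff₀ hτ]; linarith
    _ ≤ max ((Ltil + S + LG) / τ) 1 * ‖z - w‖ := by gcongr; exact le_max_left _ _

/-- Lipschitz continuity of the error-free best-response map. -/
theorem stmt7 (I mdim : ℕ) (i₀ : Fin I)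
    (K : Set (EuclideanSpace ℝ (Fin mdim)))
    (hK : K.Nonempty) (hKc : IsClosed K) (hKconv : Convex ℝ K)
    (fs : Fin I → EuclideanSpace ℝ (Fin mdim) → ℝ)
    (gfs : Fin I → EuclideanSpace ℝ (Fin mdim) → EuclideanSpace ℝ (Fin mdim))
    (hgfs : ∀ j z, HasGradientAt (fs j) (gfs j z) z)
    (Lc : Fin I → ℝ)
    (hLip : ∀ j, ∀ a ∈ K, ∀ b ∈ K, ‖gfs j a - gfs j b‖ ≤ Lc j * ‖a - b‖)
    (ftilde : EuclideanSpace ℝ (Fin mdim) → EuclideanSpace ℝ (Fin mdim) → ℝ)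
    (gft : EuclideanSpace ℝ (Fin mdim) → EuclideanSpace ℝ (Fin mdim) →
      EuclideanSpace ℝ (Fin mdim))
    (hgft : ∀ y z, HasGradientAt (fun w => ftilde w z) (gft y z) y)
    (τ : ℝ) (hτ : 0 < τ)
    (hstrong : ∀ y, StrongConvexOn K τ (fun w => ftilde w y))
    (hconsist : ∀ z ∈ K, gft z z = gfs i₀ z)
    (Ltil : ℝ)
    (hgftLip : ∀ w, ∀ a ∈ K, ∀ b ∈ K, ‖gft w a - gft w b‖ ≤ Ltil * ‖a - b‖)
    (Gm : EuclideanSpace ℝ (Fin mdim) → ℝ)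
    (gGm : EuclideanSpace ℝ (Fin mdim) → EuclideanSpace ℝ (Fin mdim))
    (hGm : ∀ z, HasGradientAt Gm (gGm z) z)
    (LG : ℝ)
    (hGmLip : ∀ a ∈ K, ∀ b ∈ K, ‖gGm a - gGm b‖ ≤ LG * ‖a - b‖)
    (Gp : EuclideanSpace ℝ (Fin mdim) → ℝ) (hGp : ConvexOn ℝ K Gp)
    (xhat : EuclideanSpace ℝ (Fin mdim) → EuclideanSpace ℝ (Fin mdim))
    (hxhat_mem : ∀ z ∈ K, xhat z ∈ K)
    (hxhat_min : ∀ z ∈ K, ∀ w ∈ K,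
      ftilde (xhat z) z - ⟪gGm z, xhat z - z⟫
          + ⟪∑ j ∈ Finset.univ.erase i₀, gfs j z, xhat z - z⟫ + Gp (xhat z) ≤
        ftilde w z - ⟪gGm z, w - z⟫
          + ⟪∑ j ∈ Finset.univ.erase i₀, gfs j z, w - z⟫ + Gp w) :
    ∃ Lhat : ℝ, 0 < Lhat ∧
      ∀ z ∈ K, ∀ w ∈ K, ‖xhat z - xhat w‖ ≤ Lhat * ‖z - w‖ :=
  stmt7_general I mdim i₀ K gfs Lc hLip ftilde gft hgft τ hτ hstrong Ltil hgftLip gGm LG hGmLip Gp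
    hGp xhat hxhat_mem hxhat_min
end

section
/- Let h: ℝ → ℝ be defined by h(x) = 1 − e^{−θ|x|} for a parameter θ > 0 (the exponential surrogate of the ℓ0 function). Then h admits the DC decomposition h(x) = θ|x| − (θ|x| − h(x)), where g⁻(x) := θ|x| − (1 − e^{−θ|x|}) is convex and differentiable on ℝ with derivative (g⁻)'(x) = sign(x)·θ·(1 − e^{−θ|x|}), and (g⁻)' is Lipschitz continuous with constant θ². -/
/-!
Write g⁻(x) = G(|x|) with G(t) = θt − 1 + e^{−θt}. Since G is smooth with G'(0) = 0, the map
x ↦ G(|x|) is differentiable everywhere with derivative the odd extension sign(x)·G'(|x|) of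
G'(t) = θ(1 − e^{−θt}). On [0, ∞) the function G' vanishes at 0, is nondecreasing and has
derivative θ²e^{−θt} ≤ θ², so its odd extension is monotone (whence g⁻ is convex) and
θ²-Lipschitz.
-/

open Real Set Asymptotics

theorem HasDerivAt.comp_abs_of_ne_zero {G : ℝ → ℝ} {g' x : ℝ} (hG : HasDerivAt G g' |x|)
    (hx : x ≠ 0) : HasDerivAt (fun y => G |y|) (sign x * g') x := by
  rcases hx.lt_or_gt with hx | hx
  · simpa [sign_of_neg hx, mul_comm, Function.comp_def] using hG.comp x (hasDerivAt_abs_neg hx)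
  · simpa [sign_of_pos hx, Function.comp_def] using hG.comp x (hasDerivAt_abs_pos hx)

theorem HasDerivAt.comp_abs_zero {G : ℝ → ℝ} (hG : HasDerivAt G 0 0) :
    HasDerivAt (fun y => G |y|) 0 0 := by
  rw [hasDerivAt_iff_isLittleO] at hG ⊢
  exact isLittleO_abs_right.1 <| by
    simpa [Function.comp_def] using hG.comp_tendsto (continuous_abs.tendsto' 0 0 abs_zero)

theorem hasDerivAt_comp_abs {G G' : ℝ → ℝ} (hG : ∀ t, HasDerivAt G (G' t) t) (hG'0 : G' 0 = 0)
    (x : ℝ) : HasDerivAt (fun y => G |y|) (sign x * G' |x|) x := by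
  rcases eq_or_ne x 0 with rfl | hx
  · simpa using (hG'0 ▸ hG 0).comp_abs_zero
  · exact (hG |x|).comp_abs_of_ne_zero hx

section OddExtension

variable {f : ℝ → ℝ}

lemma sign_mul_comp_abs_of_nonneg (hf : f 0 = 0) {x : ℝ} (hx : 0 ≤ x) :
    sign x * f |x| = f x := by
  rcases hx.eq_or_lt with rfl | hx
  · simp [hf]
  · rw [sign_of_pos hx, abs_of_pos hx, one_mul]

lemma sign_mul_comp_abs_of_nonpos (hf : f 0 = 0) {x : ℝ} (hx : x ≤ 0) :
    sign x * f |x| = -f (-x) := by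
  rcases hx.eq_or_lt with rfl | hx
  · simp [hf]
  · rw [sign_of_neg hx, abs_of_neg hx, neg_one_mul]

lemma monotone_sign_mul_comp_abs (hf0 : f 0 = 0) (hf : MonotoneOn f (Ici 0)) :
    Monotone fun x => sign x * f |x| := by
  refine MonotoneOn.Iic_union_Ici (a := 0) (fun x hx y hy hxy => ?_) (fun x hx y hy hxy => ?_)
  · simp only [sign_mul_comp_abs_of_nonpos hf0 hx, sign_mul_comp_abs_of_nonpos hf0 hy]
    exact neg_le_neg <|
      hf (mem_Ici.2 (neg_nonneg.2 hy)) (mem_Ici.2 (neg_nonneg.2 hx)) (neg_le_neg hxy)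
  · simp only [sign_mul_comp_abs_of_nonneg hf0 hx, sign_mul_comp_abs_of_nonneg hf0 hy]
    exact hf hx hy hxy

lemma abs_sign_mul_comp_abs_sub_le (hf0 : f 0 = 0) {C : ℝ}
    (hf : ∀ a ∈ Ici (0 : ℝ), ∀ b ∈ Ici (0 : ℝ), |f a - f b| ≤ C * |a - b|) (x y : ℝ) :
    |sign x * f (|x|) - sign y * f (|y|)| ≤ C * |x - y| := by
  have hf_le : ∀ a ∈ Ici (0 : ℝ), |f a| ≤ C * a := fun a ha => by
    simpa [hf0, abs_of_nonneg (mem_Ici.1 ha)] using hf a ha 0 (mem_Ici.2 le_rfl)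
  rcases le_total 0 x with hx | hx <;> rcases le_total 0 y with hy | hy
  · rw [sign_mul_comp_abs_of_nonneg hf0 hx, sign_mul_comp_abs_of_nonneg hf0 hy]
    exact hf x hx y hy
  · rw [sign_mul_comp_abs_of_nonneg hf0 hx, sign_mul_comp_abs_of_nonpos hf0 hy, sub_neg_eq_add,
      abs_of_nonneg (by linarith : 0 ≤ x - y)]
    linarith [abs_add_le (f x) (f (-y)), hf_le x hx, hf_le (-y) (neg_nonneg.2 hy)]
  · rw [sign_mul_comp_abs_of_nonpos hf0 hx, sign_mul_comp_abs_of_nonneg hf0 hy, ← abs_neg,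
      neg_sub, sub_neg_eq_add, abs_of_nonpos (by linarith : x - y ≤ 0)]
    linarith [abs_add_le (f y) (f (-x)), hf_le y hy, hf_le (-x) (neg_nonneg.2 hx)]
  · rw [sign_mul_comp_abs_of_nonpos hf0 hx, sign_mul_comp_abs_of_nonpos hf0 hy, neg_sub_neg]
    simpa only [neg_sub_neg] using hf (-y) (neg_nonneg.2 hy) (-x) (neg_nonneg.2 hx)

end OddExtension

section ExpSurrogate

variable (θ : ℝ)

lemma hasDerivAt_mul_one_sub_exp_neg_mul (t : ℝ) :
    HasDerivAt (fun t => θ * (1 - exp (-θ * t))) (θ ^ 2 * exp (-θ * t)) t :=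
  ((((hasDerivAt_id' t).const_mul (-θ)).exp.const_sub 1).const_mul θ).congr_deriv (by ring)

lemma hasDerivAt_mul_sub_one_sub_exp_neg_mul (t : ℝ) :
    HasDerivAt (fun t => θ * t - (1 - exp (-θ * t))) (θ * (1 - exp (-θ * t))) t :=
  (((hasDerivAt_id' t).const_mul θ).sub
    (((hasDerivAt_id' t).const_mul (-θ)).exp.const_sub 1)).congr_deriv (by ring)

lemma monotone_mul_one_sub_exp_neg_mul : Monotone fun t => θ * (1 - exp (-θ * t)) :=
  monotone_of_hasDerivAt_nonneg (hasDerivAt_mul_one_sub_exp_neg_mul θ) fun t => by positivity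

end ExpSurrogate

lemma abs_mul_one_sub_exp_neg_mul_sub_le {θ : ℝ} (hθ : 0 ≤ θ) {a b : ℝ} (ha : 0 ≤ a)
    (hb : 0 ≤ b) :
    |θ * (1 - exp (-θ * a)) - θ * (1 - exp (-θ * b))| ≤ θ ^ 2 * |a - b| := by
  have hderiv_le : ∀ t ∈ Ici (0 : ℝ), ‖θ ^ 2 * exp (-θ * t)‖ ≤ θ ^ 2 := fun t ht => by
    rw [Real.norm_of_nonneg (by positivity)]
    exact mul_le_of_le_one_right (sq_nonneg θ) (exp_le_one_iff.2 (by nlinarith [mem_Ici.1 ht]))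
  simpa using Convex.norm_image_sub_le_of_norm_hasDerivWithin_le
    (fun t _ => (hasDerivAt_mul_one_sub_exp_neg_mul θ t).hasDerivWithinAt) hderiv_le
    (convex_Ici 0) hb ha

/-- DC decomposition of the exponential surrogate of the ℓ0 function. -/
theorem stmt9 (θ : ℝ) (hθ : 0 < θ) :
    (∀ x : ℝ, 1 - Real.exp (-θ * |x|) =
      θ * |x| - (θ * |x| - (1 - Real.exp (-θ * |x|)))) ∧
    ConvexOn ℝ Set.univ (fun x : ℝ => θ * |x| - (1 - Real.exp (-θ * |x|))) ∧
    (∀ x : ℝ, HasDerivAt (fun x : ℝ => θ * |x| - (1 - Real.exp (-θ * |x|)))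
      (Real.sign x * (θ * (1 - Real.exp (-θ * |x|)))) x) ∧
    (∀ x y : ℝ,
      |Real.sign x * (θ * (1 - Real.exp (-θ * |x|))) -
        Real.sign y * (θ * (1 - Real.exp (-θ * |y|)))| ≤ θ ^ 2 * |x - y|) := by
  have hG'0 : θ * (1 - exp (-θ * 0)) = 0 := by simp
  have hderiv := hasDerivAt_comp_abs (hasDerivAt_mul_sub_one_sub_exp_neg_mul θ) hG'0
  refine ⟨fun x => by ring, ?_, hderiv, abs_sign_mul_comp_abs_sub_le hG'0
    fun a ha b hb => abs_mul_one_sub_exp_neg_mul_sub_le hθ.le ha hb⟩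
  refine Monotone.convexOn_univ_of_deriv (fun x => (hderiv x).differentiableAt) ?_
  rw [funext fun x => (hderiv x).deriv]
  exact monotone_sign_mul_comp_abs hG'0 ((monotone_mul_one_sub_exp_neg_mul θ).monotoneOn _)
end

section
/- Under SONATA's assumptions (f̃_i τ_i-strongly convex with ∇f̃_i(x;x) = ∇f_i(x) and ∇f̃_i(x;·) L̃_i-Lipschitz; each ∇f_j L_j-Lipschitz with L = Σ_j L_j), let x̃_i^n be the minimizer of the surrogate subproblem using the tracked direction I·y_i^n, and x̂_i(x_i^n) the error-free best response using the true gradient sum Σ_{j≠i} ∇f_j(x_i^n). Then ‖x̂_i(x_i^n) − x̃_i^n‖ ≤ (I/τ_i) ‖e_y^n‖ + (2IL/τ_i) ‖e_x^n‖, where e_y^n is the tracking disagreement (stacked deviations of y_j^n from their weighted average, which equals the gradient average) and e_x^n is the consensus disagreement of the x_j^n. In particular, if ‖e_x^n‖ → 0 and ‖e_y^n‖ → 0 then ‖x̂_i(x_i^n) − x̃_i^n‖ → 0. -/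
open Finset Filter Topology
open scoped RealInnerProductSpace

/-!
Both `x̃ᵢⁿ` and `x̂ᵢ(xᵢⁿ)` minimize the same `τ`-strongly convex objective, tilted by two
different linear terms. Adding the two quadratic-growth inequalities at the minimizers shows that
they lie within `‖Δ‖ / τ` of each other, where `Δ = ∑ⱼ ∇fⱼ(xᵢ) - I yᵢ` is the difference of the
tilts. The tracking identity `I ȳ = ∑ⱼ ∇fⱼ(xⱼ)` splits `Δ` into `I (ȳ - yᵢ)`, controlled by the
tracking disagreement, and `∑ⱼ (∇fⱼ(xᵢ) - ∇fⱼ(xⱼ))`, controlled through the Lipschitz constants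
by the consensus disagreement, since `‖xᵢ - xⱼ‖ ≤ 2 ‖eₓ‖`.
-/

section StrongConvexity

variable {E : Type*} [NormedAddCommGroup E] [InnerProductSpace ℝ E] {s : Set E} {m : ℝ}
  {f g : E → ℝ} {u v w : E}

lemma StrongConvexOn.add_convexOn (hf : StrongConvexOn s m f) (hg : ConvexOn ℝ s g) :
    StrongConvexOn s m (f + g) := by
  simpa [StrongConvexOn] using hf.add hg.uniformConvexOn_zero

lemma StrongConvexOn.add_inner (hf : StrongConvexOn s m f) (a : E) :
    StrongConvexOn s m fun w ↦ f w + ⟪a, w⟫ :=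
  hf.add_convexOn ((innerₛₗ ℝ a).convexOn hf.1)

lemma StrongConvexOn.add_sq_norm_sub_le_of_isMinOn (hf : StrongConvexOn s m f)
    (hmin : IsMinOn f s u) (hu : u ∈ s) (hw : w ∈ s) :
    f u + m / 2 * ‖w - u‖ ^ 2 ≤ f w := by
  have hshrink : ∀ t ∈ Set.Ioo (0 : ℝ) 1, (1 - t) * (m / 2 * ‖w - u‖ ^ 2) ≤ f w - f u := by
    rintro t ⟨ht₀, ht₁⟩
    have hmid := hf.2 hu hw (sub_nonneg.2 ht₁.le) ht₀.le (sub_add_cancel 1 t)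
    have hle := isMinOn_iff.1 hmin _ (hf.1 hu hw (sub_nonneg.2 ht₁.le) ht₀.le (sub_add_cancel 1 t))
    rw [norm_sub_rev] at hmid
    simp only [smul_eq_mul] at hmid
    have : t * ((1 - t) * (m / 2 * ‖w - u‖ ^ 2)) ≤ t * (f w - f u) := by nlinarith
    exact le_of_mul_le_mul_left this ht₀
  have hlim : Tendsto (fun t : ℝ ↦ (1 - t) * (m / 2 * ‖w - u‖ ^ 2)) (𝓝[>] 0)
      (𝓝 (m / 2 * ‖w - u‖ ^ 2)) := by
    have : Continuous fun t : ℝ ↦ (1 - t) * (m / 2 * ‖w - u‖ ^ 2) := by fun_prop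
    simpa using this.continuousWithinAt.tendsto (x := 0) (s := Set.Ioi 0)
  have := le_of_tendsto hlim (eventually_of_mem (Ioo_mem_nhdsGT one_pos) hshrink)
  linarith

lemma StrongConvexOn.norm_sub_le_of_isMinOn_add_inner (hf : StrongConvexOn s m f) (hm : 0 < m)
    {a b : E} (hu : u ∈ s) (hv : v ∈ s) (hmu : IsMinOn (fun w ↦ f w + ⟪a, w⟫) s u)
    (hmv : IsMinOn (fun w ↦ f w + ⟪b, w⟫) s v) :
    ‖u - v‖ ≤ ‖a - b‖ / m := by
  have hgrow_u := (hf.add_inner a).add_sq_norm_sub_le_of_isMinOn hmu hu hv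
  have hgrow_v := (hf.add_inner b).add_sq_norm_sub_le_of_isMinOn hmv hv hu
  rw [norm_sub_rev] at hgrow_u
  have hsq : m * ‖u - v‖ * ‖u - v‖ ≤ ‖a - b‖ * ‖u - v‖ := calc
    m * ‖u - v‖ * ‖u - v‖ ≤ ⟪a - b, v - u⟫ := by
      simp only [inner_sub_left, inner_sub_right] at *; nlinarith
    _ ≤ ‖a - b‖ * ‖v - u‖ := real_inner_le_norm _ _
    _ = ‖a - b‖ * ‖u - v‖ := by rw [norm_sub_rev v u]
  rw [le_div_iff₀ hm, mul_comm]
  rcases (norm_nonneg (u - v)).eq_or_lt with h0 | h0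
  · rw [← h0]; simp
  · exact le_of_mul_le_mul_right hsq h0

/-- The objectives are SONATA's surrogate subproblems at `z`: `c` plays `∇G⁻(z)`, `g` plays `G⁺`,
and `a`, `b` are two estimates of the gradient sum of the other agents. -/
lemma StrongConvexOn.norm_sub_le_of_forall_linearized_le (hf : StrongConvexOn s m f) (hm : 0 < m)
    (hg : ConvexOn ℝ s g) {a b c z : E} (hu : u ∈ s) (hv : v ∈ s)
    (hmu : ∀ w ∈ s, f u - ⟪c, u - z⟫ + ⟪a, u - z⟫ + g u ≤ f w - ⟪c, w - z⟫ + ⟪a, w - z⟫ + g w)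
    (hmv : ∀ w ∈ s, f v - ⟪c, v - z⟫ + ⟪b, v - z⟫ + g v ≤ f w - ⟪c, w - z⟫ + ⟪b, w - z⟫ + g w) :
    ‖u - v‖ ≤ ‖a - b‖ / m := by
  have hF : StrongConvexOn s m fun w ↦ f w - ⟪c, w⟫ + g w :=
    (hf.add_convexOn ((-innerₛₗ ℝ c).convexOn hf.1)).add_convexOn hg
  have hmin : ∀ d x, (∀ w ∈ s, f x - ⟪c, x - z⟫ + ⟪d, x - z⟫ + g x ≤
      f w - ⟪c, w - z⟫ + ⟪d, w - z⟫ + g w) →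
      IsMinOn (fun w ↦ f w - ⟪c, w⟫ + g w + ⟪d, w⟫) s x := fun d x h ↦ isMinOn_iff.2 fun w hw ↦ by
    have := h w hw
    simp only [inner_sub_right] at this
    linarith
  exact hF.norm_sub_le_of_isMinOn_add_inner hm hu hv (hmin a u hmu) (hmin b v hmv)

end StrongConvexity

section Disagreement

variable {ι E : Type*} [Fintype ι] [NormedAddCommGroup E]

lemma norm_le_sqrt_sum_norm_sq (v : ι → E) (j : ι) : ‖v j‖ ≤ √(∑ l, ‖v l‖ ^ 2) :=
  Real.le_sqrt_of_sq_le <| single_le_sum (f := fun l ↦ ‖v l‖ ^ 2) (fun _ _ ↦ sq_nonneg _)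
    (mem_univ j)

lemma norm_sub_le_two_mul_sqrt_sum_norm_sub_sq (v : ι → E) (c : E) (j k : ι) :
    ‖v j - v k‖ ≤ 2 * √(∑ l, ‖v l - c‖ ^ 2) := calc
  ‖v j - v k‖ = ‖(v j - c) - (v k - c)‖ := by rw [sub_sub_sub_cancel_right]
  _ ≤ ‖v j - c‖ + ‖v k - c‖ := norm_sub_le _ _
  _ ≤ 2 * √(∑ l, ‖v l - c‖ ^ 2) := by
    linarith [norm_le_sqrt_sum_norm_sq (fun l ↦ v l - c) j,
      norm_le_sqrt_sum_norm_sq (fun l ↦ v l - c) k]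

variable [NormedSpace ℝ E] {K : Set E} {g : ι → E → E} {L : ι → ℝ}

lemma norm_sum_sub_smul_le_of_smul_eq_sum (hL : ∀ j, 0 ≤ L j)
    (hLip : ∀ j, ∀ a ∈ K, ∀ b ∈ K, ‖g j a - g j b‖ ≤ L j * ‖a - b‖)
    {x y : ι → E} (hxK : ∀ j, x j ∈ K) {N : ℝ} (hN : 0 ≤ N) {ybar : E}
    (htrack : N • ybar = ∑ j, g j (x j)) (xbar : E) (i : ι) :
    ‖∑ j, g j (x i) - N • y i‖ ≤
      N * √(∑ j, ‖y j - ybar‖ ^ 2) + 2 * (∑ j, L j) * √(∑ j, ‖x j - xbar‖ ^ 2) := by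
  set ex := √(∑ j, ‖x j - xbar‖ ^ 2)
  have hsplit : ∑ j, g j (x i) - N • y i =
      ∑ j, (g j (x i) - g j (x j)) - N • (y i - ybar) := by
    rw [sum_sub_distrib, smul_sub, htrack]; abel
  have hconsensus : ‖∑ j, (g j (x i) - g j (x j))‖ ≤ 2 * (∑ j, L j) * ex := calc
    _ ≤ ∑ j, ‖g j (x i) - g j (x j)‖ := norm_sum_le _ _
    _ ≤ ∑ j, L j * (2 * ex) := sum_le_sum fun j _ ↦
      (hLip j _ (hxK i) _ (hxK j)).trans <| mul_le_mul_of_nonneg_left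
        (norm_sub_le_two_mul_sqrt_sum_norm_sub_sq x xbar i j) (hL j)
    _ = 2 * (∑ j, L j) * ex := by rw [← sum_mul]; ring
  have htracking : ‖N • (y i - ybar)‖ ≤ N * √(∑ j, ‖y j - ybar‖ ^ 2) := by
    rw [norm_smul, Real.norm_of_nonneg hN]
    exact mul_le_mul_of_nonneg_left (norm_le_sqrt_sum_norm_sq (fun j ↦ y j - ybar) i) hN
  rw [hsplit]
  linarith [norm_sub_le (∑ j, (g j (x i) - g j (x j))) (N • (y i - ybar))]

end Disagreement

theorem stmt16_general (I mdim : ℕ) (i₀ : Fin I)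
    (K : Set (EuclideanSpace ℝ (Fin mdim)))
    (gfs : Fin I → EuclideanSpace ℝ (Fin mdim) → EuclideanSpace ℝ (Fin mdim))
    (Lc : Fin I → ℝ) (hLc : ∀ j, 0 ≤ Lc j)
    (hLip : ∀ j, ∀ a ∈ K, ∀ b ∈ K, ‖gfs j a - gfs j b‖ ≤ Lc j * ‖a - b‖)
    (ftilde : EuclideanSpace ℝ (Fin mdim) → EuclideanSpace ℝ (Fin mdim) → ℝ)
    (τ : ℝ) (hτ : 0 < τ)
    (hstrong : ∀ z, StrongConvexOn K τ (fun v => ftilde v z))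
    (gGm : EuclideanSpace ℝ (Fin mdim) → EuclideanSpace ℝ (Fin mdim))
    (Gp : EuclideanSpace ℝ (Fin mdim) → ℝ) (hGp : ConvexOn ℝ K Gp)
    -- iterates, weights and trackers
    (x y : ℕ → Fin I → EuclideanSpace ℝ (Fin mdim))
    (hxK : ∀ n j, x n j ∈ K)
    (φ : ℕ → Fin I → ℝ)
    -- tracking identity: the weighted average of the trackers equals the gradient average
    (htrack : ∀ n, (I : ℝ)⁻¹ • ∑ j, φ n j • y n j = (I : ℝ)⁻¹ • ∑ j, gfs j (x n j))
    -- x̃ⁿ: minimizer of the surrogate subproblem with the tracked direction I·y_{i₀}ⁿ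
    (xt : ℕ → EuclideanSpace ℝ (Fin mdim)) (hxtK : ∀ n, xt n ∈ K)
    (hxt_min : ∀ n, ∀ w ∈ K,
      ftilde (xt n) (x n i₀) - ⟪gGm (x n i₀), xt n - x n i₀⟫
          + ⟪(I : ℝ) • y n i₀ - gfs i₀ (x n i₀), xt n - x n i₀⟫ + Gp (xt n) ≤
        ftilde w (x n i₀) - ⟪gGm (x n i₀), w - x n i₀⟫
          + ⟪(I : ℝ) • y n i₀ - gfs i₀ (x n i₀), w - x n i₀⟫ + Gp w)
    -- x̂ᵢ(xᵢⁿ): error-free best response using the true gradient sum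
    (xh : ℕ → EuclideanSpace ℝ (Fin mdim)) (hxhK : ∀ n, xh n ∈ K)
    (hxh_min : ∀ n, ∀ w ∈ K,
      ftilde (xh n) (x n i₀) - ⟪gGm (x n i₀), xh n - x n i₀⟫
          + ⟪∑ j ∈ Finset.univ.erase i₀, gfs j (x n i₀), xh n - x n i₀⟫ + Gp (xh n) ≤
        ftilde w (x n i₀) - ⟪gGm (x n i₀), w - x n i₀⟫
          + ⟪∑ j ∈ Finset.univ.erase i₀, gfs j (x n i₀), w - x n i₀⟫ + Gp w) :
    (∀ n, ‖xh n - xt n‖ ≤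
        ((I : ℝ) / τ) *
            Real.sqrt (∑ j, ‖y n j - (I : ℝ)⁻¹ • ∑ l, φ n l • y n l‖ ^ 2)
          + (2 * (I : ℝ) * (∑ j, Lc j) / τ) *
            Real.sqrt (∑ j, ‖x n j - (I : ℝ)⁻¹ • ∑ l, φ n l • x n l‖ ^ 2)) ∧
    (Tendsto (fun n =>
        Real.sqrt (∑ j, ‖x n j - (I : ℝ)⁻¹ • ∑ l, φ n l • x n l‖ ^ 2))
        atTop (nhds 0) →
      Tendsto (fun n =>
        Real.sqrt (∑ j, ‖y n j - (I : ℝ)⁻¹ • ∑ l, φ n l • y n l‖ ^ 2))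
        atTop (nhds 0) →
      Tendsto (fun n => ‖xh n - xt n‖) atTop (nhds 0)) := by
  have hI₁ : (1 : ℝ) ≤ I := by exact_mod_cast i₀.pos
  have hbound : ∀ n, ‖xh n - xt n‖ ≤
      ((I : ℝ) / τ) * √(∑ j, ‖y n j - (I : ℝ)⁻¹ • ∑ l, φ n l • y n l‖ ^ 2)
        + (2 * (I : ℝ) * (∑ j, Lc j) / τ) *
          √(∑ j, ‖x n j - (I : ℝ)⁻¹ • ∑ l, φ n l • x n l‖ ^ 2) := by
    intro n
    set z := x n i₀
    have hgap := (hstrong z).norm_sub_le_of_forall_linearized_le hτ hGp (hxhK n) (hxtK n)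
      (hxh_min n) (hxt_min n)
    have hdir : ∑ j ∈ univ.erase i₀, gfs j z - ((I : ℝ) • y n i₀ - gfs i₀ z) =
        ∑ j, gfs j z - (I : ℝ) • y n i₀ := by
      rw [← sum_erase_add _ _ (mem_univ i₀)]; abel
    rw [hdir] at hgap
    have hsum : (I : ℝ) • ((I : ℝ)⁻¹ • ∑ l, φ n l • y n l) = ∑ j, gfs j (x n j) := by
      rw [htrack n, smul_inv_smul₀ (zero_lt_one.trans_le hI₁).ne']
    have herr := norm_sum_sub_smul_le_of_smul_eq_sum (y := y n) hLc hLip (hxK n) (by positivity)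
      hsum ((I : ℝ)⁻¹ • ∑ l, φ n l • x n l) i₀
    have hLsum : 0 ≤ ∑ j, Lc j := sum_nonneg fun j _ ↦ hLc j
    calc ‖xh n - xt n‖ ≤ ‖∑ j, gfs j z - (I : ℝ) • y n i₀‖ / τ := hgap
      _ ≤ ((I : ℝ) * √(∑ j, ‖y n j - (I : ℝ)⁻¹ • ∑ l, φ n l • y n l‖ ^ 2)
            + 2 * (I : ℝ) * (∑ j, Lc j) * √(∑ j, ‖x n j - (I : ℝ)⁻¹ • ∑ l, φ n l • x n l‖ ^ 2))
            / τ := by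
        gcongr
        refine herr.trans ?_
        gcongr
        linarith
      _ = _ := by ring
  refine ⟨hbound, fun hx hy ↦ squeeze_zero (fun _ ↦ norm_nonneg _) hbound ?_⟩
  simpa using (hy.const_mul _).add (hx.const_mul _)

/-- The gap between the tracked best response x̃ᵢⁿ and the error-free best response
x̂ᵢ(xᵢⁿ) is bounded by the tracking and consensus disagreements, and vanishes with them. -/
theorem stmt16 (I mdim : ℕ) (hI : 0 < I) (i₀ : Fin I)
    (K : Set (EuclideanSpace ℝ (Fin mdim)))
    (hK : K.Nonempty) (hKc : IsClosed K) (hKconv : Convex ℝ K)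
    (fs : Fin I → EuclideanSpace ℝ (Fin mdim) → ℝ)
    (gfs : Fin I → EuclideanSpace ℝ (Fin mdim) → EuclideanSpace ℝ (Fin mdim))
    (hgfs : ∀ j z, HasGradientAt (fs j) (gfs j z) z)
    (Lc : Fin I → ℝ) (hLc : ∀ j, 0 ≤ Lc j)
    (hLip : ∀ j, ∀ a ∈ K, ∀ b ∈ K, ‖gfs j a - gfs j b‖ ≤ Lc j * ‖a - b‖)
    (ftilde : EuclideanSpace ℝ (Fin mdim) → EuclideanSpace ℝ (Fin mdim) → ℝ)
    (gft : EuclideanSpace ℝ (Fin mdim) → EuclideanSpace ℝ (Fin mdim) →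
      EuclideanSpace ℝ (Fin mdim))
    (hgft : ∀ w z, HasGradientAt (fun v => ftilde v z) (gft w z) w)
    (τ : ℝ) (hτ : 0 < τ)
    (hstrong : ∀ z, StrongConvexOn K τ (fun v => ftilde v z))
    (hconsist : ∀ z ∈ K, gft z z = gfs i₀ z)
    (Ltil : ℝ)
    (hgftLip : ∀ w, ∀ a ∈ K, ∀ b ∈ K, ‖gft w a - gft w b‖ ≤ Ltil * ‖a - b‖)
    (Gm : EuclideanSpace ℝ (Fin mdim) → ℝ)
    (gGm : EuclideanSpace ℝ (Fin mdim) → EuclideanSpace ℝ (Fin mdim))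
    (hGm : ∀ z, HasGradientAt Gm (gGm z) z)
    (Gp : EuclideanSpace ℝ (Fin mdim) → ℝ) (hGp : ConvexOn ℝ K Gp)
    -- iterates, weights and trackers
    (x y : ℕ → Fin I → EuclideanSpace ℝ (Fin mdim))
    (hxK : ∀ n j, x n j ∈ K)
    (φ : ℕ → Fin I → ℝ)
    (hφ_nonneg : ∀ n j, 0 ≤ φ n j) (hφ_sum : ∀ n, ∑ j, φ n j = (I : ℝ))
    -- tracking identity: the weighted average of the trackers equals the gradient average
    (htrack : ∀ n, (I : ℝ)⁻¹ • ∑ j, φ n j • y n j = (I : ℝ)⁻¹ • ∑ j, gfs j (x n j))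
    -- x̃ⁿ: minimizer of the surrogate subproblem with the tracked direction I·y_{i₀}ⁿ
    (xt : ℕ → EuclideanSpace ℝ (Fin mdim)) (hxtK : ∀ n, xt n ∈ K)
    (hxt_min : ∀ n, ∀ w ∈ K,
      ftilde (xt n) (x n i₀) - ⟪gGm (x n i₀), xt n - x n i₀⟫
          + ⟪(I : ℝ) • y n i₀ - gfs i₀ (x n i₀), xt n - x n i₀⟫ + Gp (xt n) ≤
        ftilde w (x n i₀) - ⟪gGm (x n i₀), w - x n i₀⟫
          + ⟪(I : ℝ) • y n i₀ - gfs i₀ (x n i₀), w - x n i₀⟫ + Gp w)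
    -- x̂ᵢ(xᵢⁿ): error-free best response using the true gradient sum
    (xh : ℕ → EuclideanSpace ℝ (Fin mdim)) (hxhK : ∀ n, xh n ∈ K)
    (hxh_min : ∀ n, ∀ w ∈ K,
      ftilde (xh n) (x n i₀) - ⟪gGm (x n i₀), xh n - x n i₀⟫
          + ⟪∑ j ∈ Finset.univ.erase i₀, gfs j (x n i₀), xh n - x n i₀⟫ + Gp (xh n) ≤
        ftilde w (x n i₀) - ⟪gGm (x n i₀), w - x n i₀⟫
          + ⟪∑ j ∈ Finset.univ.erase i₀, gfs j (x n i₀), w - x n i₀⟫ + Gp w) :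
    (∀ n, ‖xh n - xt n‖ ≤
        ((I : ℝ) / τ) *
            Real.sqrt (∑ j, ‖y n j - (I : ℝ)⁻¹ • ∑ l, φ n l • y n l‖ ^ 2)
          + (2 * (I : ℝ) * (∑ j, Lc j) / τ) *
            Real.sqrt (∑ j, ‖x n j - (I : ℝ)⁻¹ • ∑ l, φ n l • x n l‖ ^ 2)) ∧
    (Tendsto (fun n =>
        Real.sqrt (∑ j, ‖x n j - (I : ℝ)⁻¹ • ∑ l, φ n l • x n l‖ ^ 2))
        atTop (nhds 0) →
      Tendsto (fun n =>
        Real.sqrt (∑ j, ‖y n j - (I : ℝ)⁻¹ • ∑ l, φ n l • y n l‖ ^ 2))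
        atTop (nhds 0) →
      Tendsto (fun n => ‖xh n - xt n‖) atTop (nhds 0)) :=
  stmt16_general I mdim i₀ K gfs Lc hLc hLip ftilde τ hτ hstrong gGm Gp hGp x y hxK φ htrack xt hxtK
    hxt_min xh hxhK hxh_min
end

section
/- In the SONATA consensus step x^{n+1} = Ŵ^n (x^n + α^n Δx^n) with Ŵ^n = W^n ⊗ I_m row-stochastic, and gradient-tracking perturbation δ^{n+1} = (D̂_{φ^{n+1}})^{−1}(g^{n+1} − g^n) where g_i^n = ∇f_i(x_i^n), each ∇f_i is L_mx-Lipschitz, and all entries of φ^{n+1} are ≥ φ_lb > 0: the perturbation satisfies ‖δ^{n+1}‖ ≤ L_mx φ_lb^{−1} ( (√I + 1) ‖e_x^n‖ + √I α^n ‖Δx^n‖ ), where e_x^n = x^n − 1 ⊗ x̄_φ^n is the consensus disagreement. -/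
open Finset

/-!
Lipschitz continuity of the gradients and `φ' ≥ φlb` reduce the claim to bounding the ℓ² norm
of the consensus displacement `Ŵ (x + α Δx) - x`. Row stochasticity lets one subtract any common
point from every `x j`, so the displacement equals `Ŵ e - e + α Ŵ Δx` with `e = x - 1 ⊗ x̄`, and
each row of `Ŵ` is a convex combination, whence `‖Ŵ v‖ ≤ √I ‖v‖`.
-/

section L2Families

variable {ι E : Type*} [Fintype ι] [NormedAddCommGroup E]

lemma sqrt_sum_norm_sq_eq_norm_toLp (u : ι → E) :
    √(∑ i, ‖u i‖ ^ 2) = ‖WithLp.toLp 2 u‖ :=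
  (PiLp.norm_eq_of_L2 _).symm

lemma norm_toLp_le_mul_of_forall_norm_le {F : Type*} [NormedAddCommGroup F] {u : ι → E}
    {v : ι → F} {c : ℝ} (hc : 0 ≤ c) (h : ∀ i, ‖u i‖ ≤ c * ‖v i‖) :
    ‖WithLp.toLp 2 u‖ ≤ c * ‖WithLp.toLp 2 v‖ := by
  rw [← pow_le_pow_iff_left₀ (norm_nonneg _) (by positivity) two_ne_zero, mul_pow,
    PiLp.norm_sq_eq_of_L2, PiLp.norm_sq_eq_of_L2, mul_sum]
  gcongr with i
  rw [← mul_pow]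
  exact pow_le_pow_left₀ (norm_nonneg _) (h i) 2

variable [NormedSpace ℝ E]

lemma norm_sum_smul_le_norm_toLp {w : ι → ℝ} (hw_nonneg : ∀ j, 0 ≤ w j) (hw_sum : ∑ j, w j = 1)
    (v : ι → E) : ‖∑ j, w j • v j‖ ≤ ‖WithLp.toLp 2 v‖ :=
  calc ‖∑ j, w j • v j‖ ≤ ∑ j, w j * ‖v j‖ :=
        norm_sum_le_of_le _ fun j _ => by rw [norm_smul, Real.norm_of_nonneg (hw_nonneg j)]
    _ ≤ ∑ j, w j * ‖WithLp.toLp 2 v‖ := by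
        gcongr with j
        · exact hw_nonneg j
        · exact PiLp.norm_apply_le (WithLp.toLp 2 v) j
    _ = ‖WithLp.toLp 2 v‖ := by rw [← sum_mul, hw_sum, one_mul]

lemma consensus_step_sub_eq {W : Matrix ι ι ℝ} (hW_row : ∀ i, ∑ j, W i j = 1) (α : ℝ)
    (x Δx : ι → E) (c : E) (i : ι) :
    ∑ j, W i j • (x j + α • Δx j) - x i =
      (∑ j, W i j • (x j - c) - (x i - c)) + α • ∑ j, W i j • Δx j := by
  simp only [smul_add, smul_sub, sum_add_distrib, sum_sub_distrib, ← sum_smul, hW_row,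
    one_smul, smul_sum, smul_comm α]
  abel

variable {W : Matrix ι ι ℝ} (hW_nonneg : ∀ i j, 0 ≤ W i j) (hW_row : ∀ i, ∑ j, W i j = 1)
include hW_nonneg hW_row

lemma norm_toLp_mix_le (v : ι → E) :
    ‖WithLp.toLp 2 (fun i => ∑ j, W i j • v j)‖ ≤ √(Fintype.card ι) * ‖WithLp.toLp 2 v‖ := by
  rw [← pow_le_pow_iff_left₀ (norm_nonneg _) (by positivity) two_ne_zero, mul_pow,
    Real.sq_sqrt (Nat.cast_nonneg _), PiLp.norm_sq_eq_of_L2, ← nsmul_eq_mul, ← card_univ,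
    ← sum_const]
  gcongr with i
  exact norm_sum_smul_le_norm_toLp (hW_nonneg i) (hW_row i) v

lemma norm_toLp_consensus_step_sub_le {α : ℝ} (hα : 0 ≤ α) (x Δx : ι → E) (c : E) :
    ‖WithLp.toLp 2 (fun i => ∑ j, W i j • (x j + α • Δx j) - x i)‖ ≤
      (√(Fintype.card ι) + 1) * ‖WithLp.toLp 2 (fun i => x i - c)‖ +
        √(Fintype.card ι) * α * ‖WithLp.toLp 2 Δx‖ := by
  set e : ι → E := fun i => x i - c
  have hdecomp : (fun i => ∑ j, W i j • (x j + α • Δx j) - x i) =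
      (fun i => ∑ j, W i j • e j) - e + α • fun i => ∑ j, W i j • Δx j :=
    funext (consensus_step_sub_eq hW_row α x Δx c)
  rw [hdecomp, WithLp.toLp_add, WithLp.toLp_sub, WithLp.toLp_smul]
  calc _ ≤ ‖WithLp.toLp 2 (fun i => ∑ j, W i j • e j)‖ + ‖WithLp.toLp 2 e‖ +
        α * ‖WithLp.toLp 2 (fun i => ∑ j, W i j • Δx j)‖ := by
        refine (norm_add_le _ _).trans (add_le_add (norm_sub_le _ _) ?_)
        rw [norm_smul, Real.norm_of_nonneg hα]
    _ ≤ √(Fintype.card ι) * ‖WithLp.toLp 2 e‖ + ‖WithLp.toLp 2 e‖ +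
        α * (√(Fintype.card ι) * ‖WithLp.toLp 2 Δx‖) := by
        gcongr
        · exact norm_toLp_mix_le hW_nonneg hW_row e
        · exact norm_toLp_mix_le hW_nonneg hW_row Δx
    _ = _ := by ring

end L2Families

theorem stmt19_general (I mdim : ℕ)
    (W : Matrix (Fin I) (Fin I) ℝ)
    (hW_nonneg : ∀ i j, 0 ≤ W i j) (hW_row : ∀ i, ∑ j, W i j = 1)
    (φ : Fin I → ℝ)
    (φ' : Fin I → ℝ) (φlb : ℝ) (hφlb : 0 < φlb) (hφ' : ∀ i, φlb ≤ φ' i)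
    (gf : Fin I → EuclideanSpace ℝ (Fin mdim) → EuclideanSpace ℝ (Fin mdim))
    (Lmx : ℝ) (hLmx : 0 ≤ Lmx)
    (hLip : ∀ i a b, ‖gf i a - gf i b‖ ≤ Lmx * ‖a - b‖)
    (α : ℝ) (hα : 0 ≤ α)
    (x Δx : Fin I → EuclideanSpace ℝ (Fin mdim)) :
    Real.sqrt (∑ i,
        ‖(φ' i)⁻¹ • (gf i (∑ j, W i j • (x j + α • Δx j)) - gf i (x i))‖ ^ 2) ≤
      Lmx * φlb⁻¹ *
        ((Real.sqrt I + 1) *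
            Real.sqrt (∑ i, ‖x i - (I : ℝ)⁻¹ • ∑ j, φ j • x j‖ ^ 2)
          + Real.sqrt I * α * Real.sqrt (∑ i, ‖Δx i‖ ^ 2)) := by
  have hpointwise : ∀ i, ‖(φ' i)⁻¹ • (gf i (∑ j, W i j • (x j + α • Δx j)) - gf i (x i))‖ ≤
      Lmx * φlb⁻¹ * ‖∑ j, W i j • (x j + α • Δx j) - x i‖ := fun i =>
    calc _ = (φ' i)⁻¹ * ‖gf i (∑ j, W i j • (x j + α • Δx j)) - gf i (x i)‖ := by
          rw [norm_smul, Real.norm_of_nonneg (inv_nonneg.mpr (hφlb.trans_le (hφ' i)).le)]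
      _ ≤ φlb⁻¹ * (Lmx * ‖∑ j, W i j • (x j + α • Δx j) - x i‖) := by
          gcongr
          · exact hφ' i
          · exact hLip i _ _
      _ = _ := by ring
  simp only [sqrt_sum_norm_sq_eq_norm_toLp]
  calc _ ≤ Lmx * φlb⁻¹ * ‖WithLp.toLp 2 (fun i => ∑ j, W i j • (x j + α • Δx j) - x i)‖ :=
        norm_toLp_le_mul_of_forall_norm_le (by positivity) hpointwise
    _ ≤ _ := by
        gcongr
        simpa only [Fintype.card_fin] using
          norm_toLp_consensus_step_sub_le hW_nonneg hW_row hα x Δx _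

/-- Bound on the gradient-tracking perturbation in the SONATA consensus step. -/
theorem stmt19 (I mdim : ℕ) (hI : 0 < I)
    (W : Matrix (Fin I) (Fin I) ℝ)
    (hW_nonneg : ∀ i j, 0 ≤ W i j) (hW_row : ∀ i, ∑ j, W i j = 1)
    (φ : Fin I → ℝ) (hφ_nonneg : ∀ i, 0 ≤ φ i) (hφ_sum : ∑ i, φ i = (I : ℝ))
    (φ' : Fin I → ℝ) (φlb : ℝ) (hφlb : 0 < φlb) (hφ' : ∀ i, φlb ≤ φ' i)
    (f : Fin I → EuclideanSpace ℝ (Fin mdim) → ℝ)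
    (gf : Fin I → EuclideanSpace ℝ (Fin mdim) → EuclideanSpace ℝ (Fin mdim))
    (hgf : ∀ i z, HasGradientAt (f i) (gf i z) z)
    (Lmx : ℝ) (hLmx : 0 ≤ Lmx)
    (hLip : ∀ i a b, ‖gf i a - gf i b‖ ≤ Lmx * ‖a - b‖)
    (α : ℝ) (hα : 0 ≤ α)
    (x Δx : Fin I → EuclideanSpace ℝ (Fin mdim)) :
    Real.sqrt (∑ i,
        ‖(φ' i)⁻¹ • (gf i (∑ j, W i j • (x j + α • Δx j)) - gf i (x i))‖ ^ 2) ≤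
      Lmx * φlb⁻¹ *
        ((Real.sqrt I + 1) *
            Real.sqrt (∑ i, ‖x i - (I : ℝ)⁻¹ • ∑ j, φ j • x j‖ ^ 2)
          + Real.sqrt I * α * Real.sqrt (∑ i, ‖Δx i‖ ^ 2)) :=
  stmt19_general I mdim W hW_nonneg hW_row φ φ' φlb hφlb hφ' gf Lmx hLmx hLip α hα x Δx
end
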